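/- arXiv:1111.5243 — 2 statements merged into one kernel-verified Lean document; each statement's English description precedes it below -/
import Mathlib

section
/- Suppose g acts by automorphisms on both S_q(V) and Λ_q(V). Then for all i < j and k < l: if g^i_l g^j_k ≠ 0 then q_{lk} = q_{ij}, and if g^i_k g^j_l ≠ 0 then q_{lk} = q_{ij}^{-1}. -/
/-- If `g` acts by automorphisms on both `S_q(V)` and `Λ_q(V)` (expressed by the
coefficient identities below), then for all `i < j`, `k < l`:
`gm i l * gm j k ≠ 0 → q l k = q i j` and `gm i k * gm j l ≠ 0 → q l k = (q i j)⁻¹`. -/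
theorem stmt4 {n : ℕ} (q gm : Fin n → Fin n → ℂ) (hq0 : ∀ i j, q i j ≠ 0)
    (hS : ∀ i j k l : Fin n, i < j → k < l →
      gm i k * gm j l * (1 - q i j * q l k) + gm i l * gm j k * (q l k - q i j) = 0)
    (hL : ∀ i j k l : Fin n, i < j → k < l →
      gm i k * gm j l * (1 - q i j * q l k) + gm i l * gm j k * (q i j - q l k) = 0) :
    ∀ i j k l : Fin n, i < j → k < l →
      (gm i l * gm j k ≠ 0 → q l k = q i j) ∧
      (gm i k * gm j l ≠ 0 → q l k = (q i j)⁻¹) := by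
  intro i j k l hij hkl
  have h1 := hS i j k l hij hkl
  have h2 := hL i j k l hij hkl
  have hA : gm i k * gm j l * (1 - q i j * q l k) = 0 := by
    have := congrArg₂ (· + ·) h1 h2
    simp only [add_zero] at this
    have h : (2 : ℂ) * (gm i k * gm j l * (1 - q i j * q l k)) = 0 := by ring_nf; linear_combination this
    simpa using h
  have hB : gm i l * gm j k * (q l k - q i j) = 0 := by
    have h : (2 : ℂ) * (gm i l * gm j k * (q l k - q i j)) = 0 := by linear_combination h1 - h2
    simpa using h
  constructor
  · intro hne
    have := (mul_eq_zero.mp hB).resolve_left hne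
    exact sub_eq_zero.mp this
  · intro hne
    have := (mul_eq_zero.mp hA).resolve_left hne
    have h1 : q i j * q l k = 1 := by linear_combination -this
    exact eq_inv_of_mul_eq_one_right (by linear_combination h1)
end

section
/- Let G = S_n act on V = ℂ^n by permuting the basis v_1,...,v_n, with q_{ij} = -1 for all i ≠ j. Then for each transposition (r s) and each r' ∉ {r,s}, the element α = (rs) ⊗ (v_r^* ∧ v_{r'}^* + v_s^* ∧ v_{r'}^*) satisfies the three-term cocycle conditions: for all i < j < k, α^{(rs)}_{jk}(v_i - (rs)·v_i) + α^{(rs)}_{ik}(v_j - (rs)·v_j) + α^{(rs)}_{ij}(v_k - (rs)·v_k) = 0. -/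
def alphaCoef {n : ℕ} (r s r' : Fin n) : Fin n → Fin n → ℂ := fun x y =>
  if (x = r ∧ y = r') ∨ (x = r' ∧ y = r) ∨ (x = s ∧ y = r') ∨ (x = r' ∧ y = s) then 1 else 0

/-- For `S_n` acting on `V = ℂ^n` by permuting the basis (here `v i = Pi.single i 1`),
with all `q i j = -1` for `i ≠ j`, the element
`α = (rs) ⊗ (v_r^* ∧ v_{r'}^* + v_s^* ∧ v_{r'}^*)` (for `r' ∉ {r,s}`) satisfies the
three-term cocycle conditions for all `i < j < k`. -/
theorem stmt11 {n : ℕ} (r s r' : Fin n) (hrs : r ≠ s) (h1 : r' ≠ r) (h2 : r' ≠ s) :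
    ∀ i j k : Fin n, i < j → j < k →
      alphaCoef r s r' j k •
          ((Pi.single i 1 : Fin n → ℂ) - Pi.single (Equiv.swap r s i) 1)
        + alphaCoef r s r' i k •
          ((Pi.single j 1 : Fin n → ℂ) - Pi.single (Equiv.swap r s j) 1)
        + alphaCoef r s r' i j •
          ((Pi.single k 1 : Fin n → ℂ) - Pi.single (Equiv.swap r s k) 1) = 0 := by
  have hB : ∀ a b : Fin n, a ≠ r' → b ≠ r' → alphaCoef r s r' a b = 0 := by
    intro a b ha hb; simp [alphaCoef, ha, hb]
  have hD : ∀ a : Fin n, a ≠ r → a ≠ s →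
      ((Pi.single a 1 : Fin n → ℂ) - Pi.single (Equiv.swap r s a) 1) = 0 := by
    intro a ha hs; rw [Equiv.swap_apply_of_ne_of_ne ha hs, sub_self]
  have hC0 : ∀ b : Fin n, b ≠ r → b ≠ s → alphaCoef r s r' r' b = 0 := by
    intro b hb1 hb2; simp [alphaCoef, hb1, hb2, h1, h2]
  have hC0' : ∀ a : Fin n, a ≠ r → a ≠ s → alphaCoef r s r' a r' = 0 := by
    intro a ha1 ha2; simp [alphaCoef, ha1, ha2, h1, h2]
  have hCr : alphaCoef r s r' r' r = 1 := by simp [alphaCoef]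
  have hCs : alphaCoef r s r' r' s = 1 := by simp [alphaCoef]
  have hCr' : alphaCoef r s r' r r' = 1 := by simp [alphaCoef]
  have hCs' : alphaCoef r s r' s r' = 1 := by simp [alphaCoef]
  have hDr : ((Pi.single r 1 : Fin n → ℂ) - Pi.single (Equiv.swap r s r) 1)
      + ((Pi.single s 1 : Fin n → ℂ) - Pi.single (Equiv.swap r s s) 1) = 0 := by
    rw [Equiv.swap_apply_left, Equiv.swap_apply_right]; abel
  intro i j k hij hjk
  have hij' : i ≠ j := ne_of_lt hij
  have hjk' : j ≠ k := ne_of_lt hjk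
  have hik' : i ≠ k := ne_of_lt (hij.trans hjk)
  by_cases hi : i = r'
  · have hjne : j ≠ r' := fun h => hij' (hi.trans h.symm)
    have hkne : k ≠ r' := fun h => hik' (hi.trans h.symm)
    rw [hi, hB j k hjne hkne, zero_smul, zero_add]
    by_cases hjr : j = r
    · by_cases hks : k = s
      · rw [hjr, hks, hCr, hCs]; simpa using hDr
      · have hkr : k ≠ r := fun h => hjk' (hjr.trans h.symm)
        rw [hjr, hCr, hC0 k hkr hks, hD k hkr hks]; simp
    · by_cases hjs : j = s
      · by_cases hkr : k = r
        · rw [hjs, hkr, hCs, hCr]; simpa [add_comm] using hDr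
        · have hks : k ≠ s := fun h => hjk' (hjs.trans h.symm)
          rw [hjs, hCs, hC0 k hkr hks, hD k hkr hks]; simp
      · rw [hD j hjr hjs, hC0 j hjr hjs]; simp
  · by_cases hj : j = r'
    · have hkne : k ≠ r' := fun h => hjk' (hj.trans h.symm)
      rw [hj, hB i k hi hkne, zero_smul, add_zero]
      by_cases hir : i = r
      · by_cases hks : k = s
        · rw [hir, hks, hCr', hCs]; simpa using hDr
        · have hkr : k ≠ r := fun h => hik' (hir.trans h.symm)
          rw [hir, hCr', hC0 k hkr hks, hD k hkr hks]; simp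
      · by_cases his : i = s
        · by_cases hkr : k = r
          · rw [his, hkr, hCs', hCr]; simpa [add_comm] using hDr
          · have hks : k ≠ s := fun h => hik' (his.trans h.symm)
            rw [his, hCs', hC0 k hkr hks, hD k hkr hks]; simp
        · rw [hD i hir his, hC0' i hir his]; simp
    · by_cases hk : k = r'
      · rw [hk, hB i j hi hj, zero_smul, add_zero]
        by_cases hir : i = r
        · by_cases hjs : j = s
          · rw [hir, hjs, hCr', hCs']; simpa using hDr
          · have hjr : j ≠ r := fun h => hij' (hir.trans h.symm)
            rw [hir, hCr', hC0' j hjr hjs, hD j hjr hjs]; simp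
        · by_cases his : i = s
          · by_cases hjr : j = r
            · rw [his, hjr, hCs', hCr']; simpa [add_comm] using hDr
            · have hjs : j ≠ s := fun h => hij' (his.trans h.symm)
              rw [his, hCs', hC0' j hjr hjs, hD j hjr hjs]; simp
          · rw [hD i hir his, hC0' i hir his]; simp
      · rw [hB i j hi hj, hB i k hi hk, hB j k hj hk]; simp
end
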